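/- Let A, B, C, H be as in the block-matrix setup with all operators bounded, and suppose X ∈ B(H_A, H_C) satisfies the Riccati equation X A - C X + X B X = B*. Define V ∈ B(H_A ⊕ H_C) by V(x ⊕ y) = (x - X* y) ⊕ (X x + y). Then V is boundedly invertible and V⁻¹ H V is the block diagonal operator diag(Z, Ẑ), where Z = A + B X on H_A and Ẑ = C - B* X* on H_C. -/
import Mathlib

open ContinuousLinearMap
open scoped ComplexInnerProductSpace

set_option maxHeartbeats 2000000 in
/-- If `X` solves the Riccati equation `X A - C X + X B X = B*`, then the block operator
`V = [[I, -X*],[X, I]]` is boundedly invertible and `V⁻¹ H V = diag(A + B X, C - B* X*)`. -/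
theorem riccati_block_diagonalization
    {HA HC : Type*} [NormedAddCommGroup HA] [InnerProductSpace ℂ HA] [CompleteSpace HA]
    [NormedAddCommGroup HC] [InnerProductSpace ℂ HC] [CompleteSpace HC]
    (A : HA →L[ℂ] HA) (hA : IsSelfAdjoint A)
    (C : HC →L[ℂ] HC) (hC : IsSelfAdjoint C)
    (B : HC →L[ℂ] HA)
    (H : WithLp 2 (HA × HC) →L[ℂ] WithLp 2 (HA × HC))
    (hH : ∀ (x : HA) (y : HC),
      H ((WithLp.equiv 2 (HA × HC)).symm (x, y)) =
        (WithLp.equiv 2 (HA × HC)).symm (A x + B y, ContinuousLinearMap.adjoint B x + C y))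
    (X : HA →L[ℂ] HC)
    (hX : X ∘L A - C ∘L X + X ∘L B ∘L X = ContinuousLinearMap.adjoint B)
    (V : WithLp 2 (HA × HC) →L[ℂ] WithLp 2 (HA × HC))
    (hV : ∀ (x : HA) (y : HC),
      V ((WithLp.equiv 2 (HA × HC)).symm (x, y)) =
        (WithLp.equiv 2 (HA × HC)).symm (x - ContinuousLinearMap.adjoint X y, X x + y)) :
    ∃ Vinv : WithLp 2 (HA × HC) →L[ℂ] WithLp 2 (HA × HC),
      Vinv ∘L V = 1 ∧ V ∘L Vinv = 1 ∧
      ∀ (x : HA) (y : HC),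
        (Vinv ∘L H ∘L V) ((WithLp.equiv 2 (HA × HC)).symm (x, y)) =
          (WithLp.equiv 2 (HA × HC)).symm
            ((A + B ∘L X) x,
             (C - ContinuousLinearMap.adjoint B ∘L ContinuousLinearMap.adjoint X) y) := by
  set X' := ContinuousLinearMap.adjoint X with hX'
  set D : HA →L[ℂ] HA := 1 + X' ∘L X with hDdef
  set E : HC →L[ℂ] HC := 1 + X ∘L X' with hEdef
  have hDapp : ∀ a, D a = a + X' (X a) := fun a => rfl
  have hEapp : ∀ b, E b = b + X (X' b) := fun b => rfl
  -- `D` is a unit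
  have hDu : IsUnit D := by
    apply isUnit_of_forall_le_norm_inner_map D (c := 1) one_pos
    intro x
    have h1 : ⟪D x, x⟫ = ((‖x‖ : ℂ) ^ 2 + (‖X x‖ : ℂ) ^ 2) := by
      have : ⟪D x, x⟫ = ⟪x, x⟫ + ⟪X' (X x), x⟫ := by
        rw [hDapp, inner_add_left]
      rw [this, hX', ContinuousLinearMap.adjoint_inner_left,
        inner_self_eq_norm_sq_to_K, inner_self_eq_norm_sq_to_K]
      norm_cast
    rw [h1]
    push_cast
    rw [← Complex.ofReal_pow, ← Complex.ofReal_pow, ← Complex.ofReal_add,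
      Complex.norm_real]
    have : (0:ℝ) ≤ ‖x‖ ^ 2 + ‖X x‖ ^ 2 := by positivity
    rw [Real.norm_of_nonneg this]
    nlinarith [sq_nonneg ‖X x‖]
  have hEu : IsUnit E := by
    apply isUnit_of_forall_le_norm_inner_map E (c := 1) one_pos
    intro y
    have h1 : ⟪E y, y⟫ = ((‖y‖ : ℂ) ^ 2 + (‖X' y‖ : ℂ) ^ 2) := by
      have h0 : ⟪E y, y⟫ = ⟪y, y⟫ + ⟪X (X' y), y⟫ := by
        rw [hEapp, inner_add_left]
      have h2 : ⟪X (X' y), y⟫ = ⟪X' y, X' y⟫ := by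
        rw [hX', ← ContinuousLinearMap.adjoint_inner_right]
      rw [h0, h2, inner_self_eq_norm_sq_to_K, inner_self_eq_norm_sq_to_K]
      norm_cast
    rw [h1]
    push_cast
    rw [← Complex.ofReal_pow, ← Complex.ofReal_pow, ← Complex.ofReal_add,
      Complex.norm_real]
    have : (0:ℝ) ≤ ‖y‖ ^ 2 + ‖X' y‖ ^ 2 := by positivity
    rw [Real.norm_of_nonneg this]
    nlinarith [sq_nonneg ‖X' y‖]
  set Dinv : HA →L[ℂ] HA := ↑hDu.unit⁻¹ with hDinvdef
  set Einv : HC →L[ℂ] HC := ↑hEu.unit⁻¹ with hEinvdef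
  have hD1 : ∀ a, Dinv (D a) = a := by
    intro a
    have h := hDu.unit.inv_mul
    rw [hDu.unit_spec] at h
    calc Dinv (D a) = (Dinv * D) a := rfl
    _ = a := by rw [h]; rfl
  have hD2 : ∀ a, D (Dinv a) = a := by
    intro a
    have h := hDu.unit.mul_inv
    rw [hDu.unit_spec] at h
    calc D (Dinv a) = (D * Dinv) a := rfl
    _ = a := by rw [h]; rfl
  have hE1 : ∀ b, Einv (E b) = b := by
    intro b
    have h := hEu.unit.inv_mul
    rw [hEu.unit_spec] at h
    calc Einv (E b) = (Einv * E) b := rfl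
    _ = b := by rw [h]; rfl
  have hE2 : ∀ b, E (Einv b) = b := by
    intro b
    have h := hEu.unit.mul_inv
    rw [hEu.unit_spec] at h
    calc E (Einv b) = (E * Einv) b := rfl
    _ = b := by rw [h]; rfl
  -- intertwining identities
  have hXD : ∀ a, X (Dinv a) = Einv (X a) := by
    intro a
    have : X a = E (X (Dinv a)) := by
      conv_lhs => rw [← hD2 a]
      simp [hDapp, hEapp]
    rw [this, hE1]
  have hXE : ∀ b, X' (Einv b) = Dinv (X' b) := by
    intro b
    have : X' b = D (X' (Einv b)) := by
      conv_lhs => rw [← hE2 b]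
      simp [hDapp, hEapp]
    rw [this, hD1]
  -- the inverse of V
  set e := WithLp.prodContinuousLinearEquiv 2 ℂ HA HC with hedef
  set Vinv : WithLp 2 (HA × HC) →L[ℂ] WithLp 2 (HA × HC) :=
    (e.symm : HA × HC →L[ℂ] WithLp 2 (HA × HC)) ∘L
      ((Dinv.coprod (Dinv ∘L X')).prod ((-(Einv ∘L X)).coprod Einv)) ∘L
      (e : WithLp 2 (HA × HC) →L[ℂ] HA × HC) with hVinvdef
  have hVinvapp : ∀ (a : HA) (b : HC),
      Vinv ((WithLp.equiv 2 (HA × HC)).symm (a, b)) =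
        (WithLp.equiv 2 (HA × HC)).symm
          (Dinv a + Dinv (X' b), -(Einv (X a)) + Einv b) := by
    intro a b
    rfl
  -- every point of WithLp 2 (HA × HC) is of the form equiv.symm (x, y)
  have hpt : ∀ z : WithLp 2 (HA × HC),
      z = (WithLp.equiv 2 (HA × HC)).symm ((WithLp.equiv 2 (HA × HC)) z) := fun z => rfl
  have hleft : Vinv ∘L V = 1 := by
    ext z
    rw [hpt z]
    obtain ⟨x, y⟩ := (WithLp.equiv 2 (HA × HC)) z
    rw [ContinuousLinearMap.comp_apply, hV x y, hVinvapp, ContinuousLinearMap.one_apply]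
    congr 1
    refine Prod.ext ?_ ?_
    · show Dinv (x - X' y) + Dinv (X' (X x + y)) = x
      have e1 : Dinv (x - X' y) + Dinv (X' (X x + y)) =
          Dinv ((x - X' y) + X' (X x + y)) := (map_add Dinv _ _).symm
      have e2 : (x - X' y) + X' (X x + y) = D x := by
        rw [hDapp, map_add]; abel
      rw [e1, e2, hD1]
    · show -(Einv (X (x - X' y))) + Einv (X x + y) = y
      have e1 : -(Einv (X (x - X' y))) + Einv (X x + y) =
          Einv (-(X (x - X' y)) + (X x + y)) := by
        have h3 := map_add Einv (-(X (x - X' y))) (X x + y)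
        rw [map_neg] at h3
        exact h3.symm
      have e2 : -(X (x - X' y)) + (X x + y) = E y := by
        rw [hEapp, map_sub]; abel
      rw [e1, e2, hE1]
  have hright : V ∘L Vinv = 1 := by
    ext z
    rw [hpt z]
    obtain ⟨x, y⟩ := (WithLp.equiv 2 (HA × HC)) z
    rw [ContinuousLinearMap.comp_apply, hVinvapp, hV, ContinuousLinearMap.one_apply]
    congr 1
    refine Prod.ext ?_ ?_
    · show Dinv x + Dinv (X' y) - X' (-(Einv (X x)) + Einv y) = x
      rw [map_add, map_neg, hXE, hXE]
      have e1 : Dinv x + Dinv (X' y) - (-(Dinv (X' (X x))) + Dinv (X' y)) =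
          Dinv x + Dinv (X' (X x)) := by abel
      have e2 : Dinv x + Dinv (X' (X x)) = Dinv (x + X' (X x)) := (map_add Dinv _ _).symm
      rw [e1, e2, ← hDapp, hD1]
    · show X (Dinv x + Dinv (X' y)) + (-(Einv (X x)) + Einv y) = y
      rw [map_add, hXD, hXD]
      have : Einv (X x) + Einv (X (X' y)) + (-(Einv (X x)) + Einv y) =
          Einv (X (X' y)) + Einv y := by abel
      have e2 : Einv (X (X' y)) + Einv y = Einv (X (X' y) + y) := (map_add Einv _ _).symm
      have h2 : X (X' y) + y = E y := by rw [hEapp]; abel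
      rw [this, e2, h2, hE1]
  refine ⟨Vinv, hleft, hright, ?_⟩
  -- adjoint Riccati identity
  have hXadj : ∀ y, A (X' y) - X' (C y) + X' (ContinuousLinearMap.adjoint B (X' y)) = B y := by
    intro y
    have h := congrArg ContinuousLinearMap.adjoint hX
    rw [map_add, map_sub, ContinuousLinearMap.adjoint_comp, ContinuousLinearMap.adjoint_comp,
      ContinuousLinearMap.adjoint_comp, ContinuousLinearMap.adjoint_adjoint,
      hA.adjoint_eq, hC.adjoint_eq] at h
    have := ContinuousLinearMap.ext_iff.mp h y
    simpa using this
  have hXpt : ∀ x, X (A x) - C (X x) + X (B (X x)) = ContinuousLinearMap.adjoint B x := by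
    intro x
    have := ContinuousLinearMap.ext_iff.mp hX x
    simpa using this
  intro x y
  have hHV : H (V ((WithLp.equiv 2 (HA × HC)).symm (x, y))) =
      V ((WithLp.equiv 2 (HA × HC)).symm
        ((A + B ∘L X) x,
         (C - ContinuousLinearMap.adjoint B ∘L ContinuousLinearMap.adjoint X) y)) := by
    rw [hV x y, hH, hV]
    congr 1
    refine Prod.ext ?_ ?_
    · show A (x - X' y) + B (X x + y) =
        (A + B ∘L X) x - X' ((C - ContinuousLinearMap.adjoint B ∘L ContinuousLinearMap.adjoint X) y)
      simp only [map_sub, map_add, ContinuousLinearMap.add_apply, ContinuousLinearMap.sub_apply,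
        ContinuousLinearMap.comp_apply, ← hX']
      rw [← hXadj y]
      abel
    · show ContinuousLinearMap.adjoint B (x - X' y) + C (X x + y) =
        X ((A + B ∘L X) x) +
          (C - ContinuousLinearMap.adjoint B ∘L ContinuousLinearMap.adjoint X) y
      simp only [map_sub, map_add, ContinuousLinearMap.add_apply, ContinuousLinearMap.sub_apply,
        ContinuousLinearMap.comp_apply, ← hX']
      rw [← hXpt x]
      abel
  have h1 := ContinuousLinearMap.ext_iff.mp hleft
    ((WithLp.equiv 2 (HA × HC)).symm
      ((A + B ∘L X) x,
       (C - ContinuousLinearMap.adjoint B ∘L ContinuousLinearMap.adjoint X) y))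
  calc (Vinv ∘L H ∘L V) ((WithLp.equiv 2 (HA × HC)).symm (x, y))
      = Vinv (H (V ((WithLp.equiv 2 (HA × HC)).symm (x, y)))) := rfl
    _ = Vinv (V ((WithLp.equiv 2 (HA × HC)).symm
          ((A + B ∘L X) x,
           (C - ContinuousLinearMap.adjoint B ∘L ContinuousLinearMap.adjoint X) y))) := by
        rw [hHV]
    _ = (Vinv ∘L V) ((WithLp.equiv 2 (HA × HC)).symm
          ((A + B ∘L X) x,
           (C - ContinuousLinearMap.adjoint B ∘L ContinuousLinearMap.adjoint X) y)) := rfl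
    _ = (WithLp.equiv 2 (HA × HC)).symm
          ((A + B ∘L X) x,
           (C - ContinuousLinearMap.adjoint B ∘L ContinuousLinearMap.adjoint X) y) := by
        rw [h1]; rfl
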